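/- Let β ≠ 0 and (θ₁,θ₂) ∈ (0,1)². For every t in the open interval (max{0,θ₁+θ₂−1}, min{θ₁,θ₂}), the first derivative of t ↦ Φ_β(θ₁,θ₂;t) equals ln[(1−e^{−β t₁₁})(1−e^{−β t₂₂}) / ((e^{β t₁₂}−1)(e^{β t₂₁}−1))], where t₁₁ = t, t₁₂ = θ₁ − t, t₂₁ = θ₂ − t, t₂₂ = 1 − θ₁ − θ₂ + t; in particular, t is a critical point of Φ_β(θ₁,θ₂;·) if and only if (1−e^{−β t₁₁})(1−e^{−β t₂₂}) = (e^{β t₁₂}−1)(e^{β t₂₁}−1). -/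

import Mathlib

open MeasureTheory Real Set Filter ENNReal
open scoped Classical

noncomputable section

/-- Lebesgue measure on `[0,1]` (as a measure on `ℝ`). -/
def lamI : Measure ℝ := volume.restrict (Set.Icc (0:ℝ) 1)

/-- Lebesgue measure on `[0,1]²` (as a measure on `ℝ × ℝ`). -/
def lam2 : Measure (ℝ × ℝ) := lamI.prod lamI

/-- The pair interaction `h((x₁,y₁),(x₂,y₂))`. -/
def hfun (p q : ℝ × ℝ) : ℝ := if (p.1 - q.1) * (p.2 - q.2) < 0 then 1 else 0

/-- The limiting pressure `p(β)`, interpreted as `0` at `β = 0`. -/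
def pP (β : ℝ) : ℝ :=
  if β = 0 then 0 else ∫ x in (0:ℝ)..1, Real.log ((1 - Real.exp (-β * x)) / (β * x))

/-- The relative entropy `S(ν | λ⊗²) ∈ ℝ ∪ {−∞}` for measures on `[0,1]²`. -/
def Srel2 (ν : Measure (ℝ × ℝ)) : EReal :=
  if ν ≪ lam2 then (((- ∫ p, Real.log ((ν.rnDeriv lam2 p).toReal) ∂ν) : ℝ) : EReal) else ⊥

/-- The relative entropy `S(μ | λ) ∈ ℝ ∪ {−∞}` for measures on `[0,1]`. -/
def Srel1 (μ : Measure ℝ) : EReal :=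
  if μ ≪ lamI then (((- ∫ x, Real.log ((μ.rnDeriv lamI x).toReal) ∂μ) : ℝ) : EReal) else ⊥

/-- The mean-field energy `ℰ(ν)`. -/
def energy (ν : Measure (ℝ × ℝ)) : ℝ := (1 / 2) * ∫ p, ∫ q, hfun p q ∂ν ∂ν

/-- The large deviation rate function `I_β(ν) = −(S(ν|λ⊗²) − β ℰ(ν) − p(β))`. -/
def rate (β : ℝ) (ν : Measure (ℝ × ℝ)) : EReal :=
  -(Srel2 ν - ((β * energy ν : ℝ) : EReal) - ((pP β : ℝ) : EReal))

/-- The explicit four-square value `Φ̃_β(θ₁,θ₂;t₁₁,t₁₂,t₂₁,t₂₂)`. -/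
def Phit (β θ₁ θ₂ t₁₁ t₁₂ t₂₁ t₂₂ : ℝ) : ℝ :=
  pP β + t₁₁ * Real.log (t₁₁ / (θ₁ * θ₂)) + t₁₂ * Real.log (t₁₂ / (θ₁ * (1 - θ₂)))
    + t₂₁ * Real.log (t₂₁ / ((1 - θ₁) * θ₂)) + t₂₂ * Real.log (t₂₂ / ((1 - θ₁) * (1 - θ₂)))
    + t₁₁ * pP (β * t₁₁) + t₁₂ * pP (β * t₁₂) + t₂₁ * pP (β * t₂₁) + t₂₂ * pP (β * t₂₂)
    - (t₁₁ + t₁₂) * pP (β * (t₁₁ + t₁₂)) - (t₁₁ + t₂₁) * pP (β * (t₁₁ + t₂₁))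
    - (t₁₂ + t₂₂) * pP (β * (t₁₂ + t₂₂)) - (t₂₁ + t₂₂) * pP (β * (t₂₁ + t₂₂))
    + β * t₁₂ * t₂₁

/-- The one-parameter reduction `Φ_β(θ₁,θ₂;t)`. -/
def Phi (β θ₁ θ₂ t : ℝ) : ℝ := Phit β θ₁ θ₂ t (θ₁ - t) (θ₂ - t) (1 - θ₁ - θ₂ + t)

/-! Put `g_β(x) = log((1 − e^{−βx})/(βx))`. As `(1 − e^{−y})/y` is the difference quotient of
`1 − e^{−y}` at `0`, `g_β` is continuous, and its junk value `log (0/0) = 0` at `x = 0` is also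
its limit there. Scaling the integral defining `p` gives `x p(βx) = ∫₀ˣ g_β`, so the fundamental
theorem of calculus turns the derivative of a cell term `x log(x/c) + x p(βx)` into
`log(x/c) + 1 + g_β(x) = log(1 − e^{−βx}) − log β − log c + 1`. The marginal terms of `Φ_β` do
not depend on `t`; the cells enter with signs `+, −, −, +`, so the constants and, because
`|Λ₁₁||Λ₂₂| = |Λ₁₂||Λ₂₁|`, the `log |Λ_{ij}|` cancel. The energy term contributes
`−β(t₁₂ + t₂₁)`, which turns `log(1 − e^{−βt₁₂})` into `log(e^{βt₁₂} − 1)` and likewise for `t₂₁`.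
Both products in the critical-point equation are positive (each factor has the sign of `β`), so
the logarithm of their quotient vanishes exactly when they are equal. -/

lemma exp_sub_one_ne_zero {z : ℝ} (hz : z ≠ 0) : Real.exp z - 1 ≠ 0 := by
  rw [sub_ne_zero, Ne, Real.exp_eq_one_iff]
  exact hz

lemma one_sub_exp_ne_zero {z : ℝ} (hz : z ≠ 0) : 1 - Real.exp z ≠ 0 := by
  rw [← neg_sub, neg_ne_zero]
  exact exp_sub_one_ne_zero hz

lemma log_exp_sub_one (z : ℝ) : Real.log (Real.exp z - 1) = z + Real.log (1 - Real.exp (-z)) := by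
  rcases eq_or_ne z 0 with rfl | hz
  · simp
  rw [show Real.exp z - 1 = Real.exp z * (1 - Real.exp (-z)) by
      rw [mul_sub, ← Real.exp_add, add_neg_cancel, Real.exp_zero, mul_one],
    Real.log_mul (Real.exp_ne_zero z) (one_sub_exp_ne_zero (neg_ne_zero.2 hz)), Real.log_exp]

lemma exp_sub_one_mul_exp_sub_one_pos {β x y : ℝ} (hβ : β ≠ 0) (hx : 0 < x) (hy : 0 < y) :
    0 < (Real.exp (β * x) - 1) * (Real.exp (β * y) - 1) := by
  rcases hβ.lt_or_gt with hβ | hβ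
  · apply mul_pos_of_neg_of_neg <;> rw [sub_neg, Real.exp_lt_one_iff] <;> nlinarith
  · apply _root_.mul_pos <;> rw [sub_pos, Real.one_lt_exp_iff] <;> positivity

lemma hasDerivAt_mul_log_div {c x : ℝ} (hc : c ≠ 0) (hx : x ≠ 0) :
    HasDerivAt (fun y => y * Real.log (y / c)) (Real.log (x / c) + 1) x := by
  have h := (Real.hasDerivAt_mul_log hx).sub ((hasDerivAt_id x).mul_const (Real.log c))
  rw [one_mul] at h
  rw [Real.log_div hx hc, sub_add_eq_add_sub]
  refine h.congr_of_eventuallyEq ?_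
  filter_upwards [eventually_ne_nhds hx] with y hy
  rw [Real.log_div hy hc, mul_sub]
  rfl

def pPIntegrand (β x : ℝ) : ℝ := Real.log ((1 - Real.exp (-β * x)) / (β * x))

lemma dslope_one_sub_exp_neg_zero : dslope (fun y : ℝ => 1 - Real.exp (-y)) 0 0 = 1 := by
  rw [dslope_same]
  simpa using ((Real.hasDerivAt_exp _).comp (0 : ℝ) (hasDerivAt_neg 0)).const_sub 1 |>.deriv

lemma pPIntegrand_eq_log_dslope (β : ℝ) :
    pPIntegrand β = fun x => Real.log (dslope (fun y => 1 - Real.exp (-y)) 0 (β * x)) := by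
  funext x
  rcases eq_or_ne (β * x) 0 with h | h
  · rw [h, dslope_one_sub_exp_neg_zero, Real.log_one, pPIntegrand, h, _root_.div_zero,
      Real.log_zero]
  · rw [dslope_of_ne _ h, slope_def_field, pPIntegrand]
    simp

lemma continuous_pPIntegrand (β : ℝ) : Continuous (pPIntegrand β) := by
  have hdiff : Differentiable ℝ fun y : ℝ => 1 - Real.exp (-y) := by fun_prop
  have hcont : Continuous (dslope (fun y : ℝ => 1 - Real.exp (-y)) 0) :=
    continuousOn_univ.1 <| (continuousOn_dslope univ_mem).2
      ⟨hdiff.continuous.continuousOn, hdiff 0⟩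
  have hne (y : ℝ) : dslope (fun y : ℝ => 1 - Real.exp (-y)) 0 y ≠ 0 := by
    rcases eq_or_ne y 0 with rfl | hy
    · rw [dslope_one_sub_exp_neg_zero]
      exact one_ne_zero
    · rw [dslope_of_ne _ hy, slope_def_field]
      simpa using ⟨one_sub_exp_ne_zero (neg_ne_zero.2 hy), hy⟩
  rw [pPIntegrand_eq_log_dslope]
  exact (hcont.comp (continuous_const_mul β)).log fun x => hne _

lemma mul_pP_mul_eq_integral (β y : ℝ) :
    y * pP (β * y) = ∫ x in (0:ℝ)..y, pPIntegrand β x := by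
  rcases eq_or_ne (β * y) 0 with h | h
  · rcases mul_eq_zero.1 h with rfl | rfl
    · simp [pP, pPIntegrand]
    · simp
  have hy : y ≠ 0 := right_ne_zero_of_mul h
  have hsub := intervalIntegral.integral_comp_mul_right (pPIntegrand β) hy (a := 0) (b := 1)
  rw [zero_mul, one_mul] at hsub
  have hscale : ∫ x in (0:ℝ)..1, Real.log ((1 - Real.exp (-(β * y) * x)) / (β * y * x)) =
      ∫ x in (0:ℝ)..1, pPIntegrand β (x * y) := by
    congr 1
    funext x
    rw [pPIntegrand]
    ring_nf
  rw [pP, if_neg h, hscale, hsub, smul_eq_mul, mul_inv_cancel_left₀ hy]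

lemma hasDerivAt_mul_pP_mul (β x : ℝ) :
    HasDerivAt (fun y => y * pP (β * y)) (pPIntegrand β x) x := by
  have hc := continuous_pPIntegrand β
  simp_rw [mul_pP_mul_eq_integral]
  exact intervalIntegral.integral_hasDerivAt_right (hc.intervalIntegrable 0 x)
    hc.stronglyMeasurable.stronglyMeasurableAtFilter hc.continuousAt

def cellTerm (β c x : ℝ) : ℝ := x * Real.log (x / c) + x * pP (β * x)

lemma hasDerivAt_cellTerm {β c x : ℝ} (hβ : β ≠ 0) (hc : c ≠ 0) (hx : x ≠ 0) :
    HasDerivAt (cellTerm β c)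
      (Real.log (1 - Real.exp (-β * x)) - Real.log β - Real.log c + 1) x := by
  refine ((hasDerivAt_mul_log_div hc hx).add (hasDerivAt_mul_pP_mul β x)).congr_deriv ?_
  rw [pPIntegrand, Real.log_div hx hc,
    Real.log_div (one_sub_exp_ne_zero (mul_ne_zero (neg_ne_zero.2 hβ) hx)) (mul_ne_zero hβ hx),
    Real.log_mul hβ hx]
  ring

lemma Phi_eq_cellTerm (β θ₁ θ₂ : ℝ) :
    Phi β θ₁ θ₂ = fun s =>
      cellTerm β (θ₁ * θ₂) s + cellTerm β (θ₁ * (1 - θ₂)) (θ₁ - s)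
        + cellTerm β ((1 - θ₁) * θ₂) (θ₂ - s)
        + cellTerm β ((1 - θ₁) * (1 - θ₂)) (1 - θ₁ - θ₂ + s) + β * ((θ₁ - s) * (θ₂ - s))
        + (pP β - θ₁ * pP (β * θ₁) - θ₂ * pP (β * θ₂)
          - (1 - θ₂) * pP (β * (1 - θ₂)) - (1 - θ₁) * pP (β * (1 - θ₁))) := by
  funext s
  simp only [Phi, Phit, cellTerm]
  rw [show s + (θ₁ - s) = θ₁ by ring, show s + (θ₂ - s) = θ₂ by ring,
    show θ₁ - s + (1 - θ₁ - θ₂ + s) = 1 - θ₂ by ring,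
    show θ₂ - s + (1 - θ₁ - θ₂ + s) = 1 - θ₁ by ring]
  ring

lemma hasDerivAt_Phi {β θ₁ θ₂ t : ℝ} (hβ : β ≠ 0) (h₁₁ : 0 < t) (h₁₂ : 0 < θ₁ - t)
    (h₂₁ : 0 < θ₂ - t) (h₂₂ : 0 < 1 - θ₁ - θ₂ + t) :
    HasDerivAt (Phi β θ₁ θ₂)
      (Real.log ((1 - Real.exp (-β * t)) * (1 - Real.exp (-β * (1 - θ₁ - θ₂ + t))) /
        ((Real.exp (β * (θ₁ - t)) - 1) * (Real.exp (β * (θ₂ - t)) - 1)))) t := by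
  have hθ₁ : θ₁ ≠ 0 := by linarith
  have hθ₂ : θ₂ ≠ 0 := by linarith
  have h1θ₁ : 1 - θ₁ ≠ 0 := by linarith
  have h1θ₂ : 1 - θ₂ ≠ 0 := by linarith
  have hd₁ := (hasDerivAt_id' t).const_sub θ₁
  have hd₂ := (hasDerivAt_id' t).const_sub θ₂
  have hd := (((((hasDerivAt_cellTerm hβ (mul_ne_zero hθ₁ hθ₂) h₁₁.ne').add
    ((hasDerivAt_cellTerm hβ (mul_ne_zero hθ₁ h1θ₂) h₁₂.ne').comp t hd₁)).add
    ((hasDerivAt_cellTerm hβ (mul_ne_zero h1θ₁ hθ₂) h₂₁.ne').comp t hd₂)).add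
    ((hasDerivAt_cellTerm hβ (mul_ne_zero h1θ₁ h1θ₂) h₂₂.ne').comp t
      ((hasDerivAt_id' t).const_add (1 - θ₁ - θ₂)))).add
    ((hd₁.mul hd₂).const_mul β)).add_const
    (pP β - θ₁ * pP (β * θ₁) - θ₂ * pP (β * θ₂)
      - (1 - θ₂) * pP (β * (1 - θ₂)) - (1 - θ₁) * pP (β * (1 - θ₁)))
  rw [Phi_eq_cellTerm]
  refine hd.congr_deriv ?_
  have ha {x : ℝ} (hx : 0 < x) : 1 - Real.exp (-β * x) ≠ 0 :=
    one_sub_exp_ne_zero (mul_ne_zero (neg_ne_zero.2 hβ) hx.ne')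
  have hb {x : ℝ} (hx : 0 < x) : Real.exp (β * x) - 1 ≠ 0 :=
    exp_sub_one_ne_zero (mul_ne_zero hβ hx.ne')
  rw [Real.log_div (mul_ne_zero (ha h₁₁) (ha h₂₂)) (mul_ne_zero (hb h₁₂) (hb h₂₁)),
    Real.log_mul (ha h₁₁) (ha h₂₂), Real.log_mul (hb h₁₂) (hb h₂₁),
    log_exp_sub_one, log_exp_sub_one, Real.log_mul hθ₁ hθ₂, Real.log_mul hθ₁ h1θ₂,
    Real.log_mul h1θ₁ hθ₂, Real.log_mul h1θ₁ h1θ₂]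
  simp only [neg_mul]
  ring

theorem statement16_general (β θ₁ θ₂ : ℝ) (hβ : β ≠ 0)
    (t : ℝ) (ht : t ∈ Set.Ioo (max 0 (θ₁ + θ₂ - 1)) (min θ₁ θ₂)) :
    deriv (fun s => Phi β θ₁ θ₂ s) t =
      Real.log ((1 - Real.exp (-β * t)) * (1 - Real.exp (-β * (1 - θ₁ - θ₂ + t))) /
        ((Real.exp (β * (θ₁ - t)) - 1) * (Real.exp (β * (θ₂ - t)) - 1))) ∧
    (deriv (fun s => Phi β θ₁ θ₂ s) t = 0 ↔
      (1 - Real.exp (-β * t)) * (1 - Real.exp (-β * (1 - θ₁ - θ₂ + t))) =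
        (Real.exp (β * (θ₁ - t)) - 1) * (Real.exp (β * (θ₂ - t)) - 1)) := by
  obtain ⟨h₁₁, hlo⟩ := max_lt_iff.1 ht.1
  obtain ⟨hhi₁, hhi₂⟩ := lt_min_iff.1 ht.2
  have h₁₂ : 0 < θ₁ - t := by linarith
  have h₂₁ : 0 < θ₂ - t := by linarith
  have h₂₂ : 0 < 1 - θ₁ - θ₂ + t := by linarith
  have hderiv := (hasDerivAt_Phi hβ h₁₁ h₁₂ h₂₁ h₂₂).deriv
  have hA : 0 < (1 - Real.exp (-β * t)) * (1 - Real.exp (-β * (1 - θ₁ - θ₂ + t))) := by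
    convert exp_sub_one_mul_exp_sub_one_pos (neg_ne_zero.2 hβ) h₁₁ h₂₂ using 1
    ring
  have hB := exp_sub_one_mul_exp_sub_one_pos hβ h₁₂ h₂₁
  refine ⟨hderiv, ?_⟩
  rw [hderiv, Real.log_div hA.ne' hB.ne', sub_eq_zero, Real.log_injOn_pos.eq_iff hA hB]

/-- The first derivative of `t ↦ Φ_β(θ₁,θ₂;t)` on the interior of `I_{θ₁,θ₂}` equals
`ln[(1−e^{−βt₁₁})(1−e^{−βt₂₂})/((e^{βt₁₂}−1)(e^{βt₂₁}−1))]`; in particular `t` is a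
critical point iff `(1−e^{−βt₁₁})(1−e^{−βt₂₂}) = (e^{βt₁₂}−1)(e^{βt₂₁}−1)`. -/
theorem statement16 (β θ₁ θ₂ : ℝ) (hβ : β ≠ 0)
    (hθ₁ : θ₁ ∈ Set.Ioo (0:ℝ) 1) (hθ₂ : θ₂ ∈ Set.Ioo (0:ℝ) 1)
    (t : ℝ) (ht : t ∈ Set.Ioo (max 0 (θ₁ + θ₂ - 1)) (min θ₁ θ₂)) :
    deriv (fun s => Phi β θ₁ θ₂ s) t =
      Real.log ((1 - Real.exp (-β * t)) * (1 - Real.exp (-β * (1 - θ₁ - θ₂ + t))) /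
        ((Real.exp (β * (θ₁ - t)) - 1) * (Real.exp (β * (θ₂ - t)) - 1))) ∧
    (deriv (fun s => Phi β θ₁ θ₂ s) t = 0 ↔
      (1 - Real.exp (-β * t)) * (1 - Real.exp (-β * (1 - θ₁ - θ₂ + t))) =
        (Real.exp (β * (θ₁ - t)) - 1) * (Real.exp (β * (θ₂ - t)) - 1)) :=
  statement16_general β θ₁ θ₂ hβ t ht
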